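/- arXiv:1802.06435 — 2 statements merged into one kernel-verified Lean document; each statement's English description precedes it below -/
import Mathlib

section
/- (Semi-Fredholm estimate.) Let X, Y, Z be Banach spaces, D : X → Y a bounded linear operator, and K : X → Z a compact linear operator. Suppose there is a constant c > 0 such that ‖x‖_X ≤ c (‖Dx‖_Y + ‖Kx‖_Z) for every x ∈ X. Then D has closed range and finite-dimensional kernel. -/
open Metric Filter Set Topology


set_option maxHeartbeats 1000000 in
/-- **Semi-Fredholm estimate.** Let `D : X → Y` be bounded linear, `K : X → Z` a compact
linear operator, and suppose `‖x‖ ≤ c (‖Dx‖ + ‖Kx‖)` for all `x` and some constant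
`c > 0`. Then `D` has closed range and finite-dimensional kernel. -/
theorem semi_fredholm_estimate
    {X Y Z : Type*}
    [NormedAddCommGroup X] [NormedSpace ℝ X] [CompleteSpace X]
    [NormedAddCommGroup Y] [NormedSpace ℝ Y] [CompleteSpace Y]
    [NormedAddCommGroup Z] [NormedSpace ℝ Z] [CompleteSpace Z]
    (D : X →L[ℝ] Y) (K : X →L[ℝ] Z)
    (hK : IsCompactOperator ⇑K)
    (c : ℝ) (hc : 0 < c)
    (hest : ∀ x : X, ‖x‖ ≤ c * (‖D x‖ + ‖K x‖)) :
    IsClosed (LinearMap.range (D : X →ₗ[ℝ] Y) : Set Y) ∧ FiniteDimensional ℝ (LinearMap.ker (D : X →ₗ[ℝ] Y)) := by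
  classical
  set N : Submodule ℝ X := LinearMap.ker (D : X →ₗ[ℝ] Y) with hNdef
  -- the compact image of the unit ball
  have hC : IsCompact (closure (⇑K '' Metric.closedBall (0:X) 1)) :=
    hK.isCompact_closure_image_of_bounded isBounded_closedBall
  -- Step 1 : finite dimensional kernel
  haveI hNclosed : IsClosed (N : Set X) := ContinuousLinearMap.isClosed_ker D
  haveI : CompleteSpace N := hNclosed.completeSpace_coe
  have hsub : ∀ x y : N, ‖(x:X) - y‖ ≤ c * ‖K ((x:X) - y)‖ := by
    intro x y
    have hD : D ((x:X) - (y:X)) = 0 := by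
      rw [map_sub, (show D (x:X) = 0 from LinearMap.mem_ker.mp x.2), (show D (y:X) = 0 from LinearMap.mem_ker.mp y.2), sub_zero]
    have h := hest ((x:X) - y)
    rwa [hD, norm_zero, zero_add] at h
  have hantiK : AntilipschitzWith (⟨c, hc.le⟩ : NNReal) (fun x : N => K (x : X)) := by
    refine AntilipschitzWith.of_le_mul_dist fun x y => ?_
    rw [Subtype.dist_eq, dist_eq_norm, dist_eq_norm, ← map_sub]
    exact hsub x y
  have hui : IsUniformInducing (fun x : N => K (x : X)) :=
    hantiK.isUniformInducing (K.comp N.subtypeL).uniformContinuous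
  have himage : (fun x : N => K (x : X)) '' Metric.closedBall 0 1 ⊆
      closure (⇑K '' Metric.closedBall (0:X) 1) := by
    rintro - ⟨x, hx, rfl⟩
    refine subset_closure ⟨(x : X), ?_, rfl⟩
    simpa [Metric.mem_closedBall, dist_eq_norm, Subtype.dist_eq] using hx
  have htbB : TotallyBounded (Metric.closedBall (0:N) 1) := by
    refine (totallyBounded_image_iff hui).mp ?_
    exact hC.totallyBounded.subset himage
  have hcomp : IsCompact (Metric.closedBall (0:N) 1) :=
    isCompact_iff_totallyBounded_isComplete.mpr
      ⟨htbB, Metric.isClosed_closedBall.isComplete⟩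
  haveI hfd : FiniteDimensional ℝ N := .of_isCompact_closedBall₀ ℝ one_pos hcomp
  refine ⟨?_, hfd⟩
  -- Step 2 : closed range
  obtain ⟨q, hq_closed, hq_compl⟩ :=
    (Submodule.ClosedComplemented.of_finiteDimensional N).exists_isClosed_isCompl
  haveI : CompleteSpace q := hq_closed.completeSpace_coe
  -- the combined operator
  set W : X →L[ℝ] (Y × Z) := D.prod K with hWdef
  have hWest : ∀ x : X, ‖x‖ ≤ 2 * c * ‖W x‖ := by
    intro x
    have h1 : ‖D x‖ ≤ ‖W x‖ := norm_fst_le (W x)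
    have h2 : ‖K x‖ ≤ ‖W x‖ := norm_snd_le (W x)
    nlinarith [hest x]
  -- D is bounded below on q
  have hbb : ∃ c' : ℝ, 0 < c' ∧ ∀ x : q, ‖(x:X)‖ ≤ c' * ‖D (x:X)‖ := by
    by_contra h
    push_neg at h
    have hseq : ∀ n : ℕ, ∃ x : q, ‖(x:X)‖ = 1 ∧ ‖D (x:X)‖ < 1 / (n + 1) := by
      intro n
      obtain ⟨x, hx⟩ := h (n + 1) (by positivity)
      have hx0 : (x : X) ≠ 0 := by
        intro h0
        rw [h0, norm_zero, map_zero, norm_zero, mul_zero] at hx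
        exact lt_irrefl 0 hx
      have hxn : (0:ℝ) < ‖(x:X)‖ := norm_pos_iff.mpr hx0
      refine ⟨(‖(x:X)‖⁻¹) • x, ?_, ?_⟩
      · rw [Submodule.coe_smul, norm_smul, norm_inv, norm_norm, inv_mul_cancel₀ hxn.ne']
      · rw [Submodule.coe_smul, map_smul, norm_smul, norm_inv, norm_norm]
        rw [inv_mul_lt_iff₀ hxn, mul_one_div, lt_div_iff₀ (by positivity : (0:ℝ) < (n:ℝ)+1)]
        nlinarith [hx]
    choose u hu1 hu2 using hseq
    have hz_mem : ∀ n, K ((u n : X)) ∈ closure (⇑K '' Metric.closedBall (0:X) 1) := by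
      intro n
      exact subset_closure ⟨(u n : X), by simp [Metric.mem_closedBall, dist_eq_norm, hu1 n], rfl⟩
    obtain ⟨l, -, φ, hφ, hzl⟩ := hC.tendsto_subseq hz_mem
    set v : ℕ → X := fun n => ((u (φ n) : X)) with hvdef
    have hDv : Tendsto (fun n => D (v n)) atTop (𝓝 0) := by
      refine squeeze_zero_norm (fun n => ?_) tendsto_one_div_add_atTop_nhds_zero_nat
      have h1 : ‖D (v n)‖ < 1 / (φ n + 1) := hu2 (φ n)
      have h2 : (1:ℝ) / (φ n + 1) ≤ 1 / (n + 1) := by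
        apply one_div_le_one_div_of_le (by positivity)
        have h3 : (n:ℝ) ≤ φ n := Nat.cast_le.mpr hφ.le_apply
        linarith
      linarith
    have hKv : Tendsto (fun n => K (v n)) atTop (𝓝 l) := hzl
    have hWv : CauchySeq (fun n => W (v n)) :=
      (hDv.prodMk_nhds hKv).cauchySeq
    have hcauchy : CauchySeq v := by
      rw [Metric.cauchySeq_iff] at hWv ⊢
      intro ε hε
      obtain ⟨M, hM⟩ := hWv (ε / (2 * c)) (by positivity)
      refine ⟨M, fun m hm n hn => ?_⟩
      have h1 : dist (v m) (v n) ≤ 2 * c * dist (W (v m)) (W (v n)) := by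
        rw [dist_eq_norm, dist_eq_norm, ← map_sub]
        exact hWest (v m - v n)
      have h2 := hM m hm n hn
      calc dist (v m) (v n) ≤ 2 * c * dist (W (v m)) (W (v n)) := h1
      _ < 2 * c * (ε / (2 * c)) := by
          exact mul_lt_mul_of_pos_left h2 (by positivity)
      _ = ε := by field_simp
    obtain ⟨x, hx⟩ := cauchySeq_tendsto_of_complete hcauchy
    have hxq : x ∈ q := hq_closed.mem_of_tendsto hx (Eventually.of_forall fun n => (u (φ n)).2)
    have hxnorm : ‖x‖ = 1 := by
      have : Tendsto (fun n => ‖v n‖) atTop (𝓝 ‖x‖) := hx.norm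
      have h1 : (fun n => ‖v n‖) = fun _ => (1:ℝ) := funext fun n => hu1 (φ n)
      rw [h1] at this
      exact tendsto_nhds_unique this tendsto_const_nhds
    have hxker : x ∈ N := by
      have h1 : Tendsto (fun n => D (v n)) atTop (𝓝 (D x)) := (D.continuous.tendsto x).comp hx
      have : D x = 0 := tendsto_nhds_unique h1 hDv
      exact LinearMap.mem_ker.mpr this
    have hx0 : x = 0 := by
      have : x ∈ N ⊓ q := ⟨hxker, hxq⟩
      rwa [hq_compl.inf_eq_bot, Submodule.mem_bot] at this
    rw [hx0, norm_zero] at hxnorm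
    exact one_ne_zero hxnorm.symm
  obtain ⟨c', hc', hbb⟩ := hbb
  -- D restricted to q is antilipschitz; its range is the range of D and is closed
  set Dq : q →L[ℝ] Y := D.comp q.subtypeL with hDqdef
  have hanti : AntilipschitzWith c'.toNNReal ⇑Dq := by
    refine AntilipschitzWith.of_le_mul_dist fun x y => ?_
    rw [Subtype.dist_eq, dist_eq_norm, dist_eq_norm, ← map_sub, Real.coe_toNNReal _ hc'.le]
    have hDq : Dq (x - y) = D ((x:X) - (y:X)) := by
      show D (((x - y : q) : X)) = _
      rw [Submodule.coe_sub]
    rw [hDq]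
    have h := hbb (x - y)
    rwa [Submodule.coe_sub] at h
  have hclosed : IsClosed (Set.range ⇑Dq) := hanti.isClosed_range Dq.uniformContinuous
  have hrange : (LinearMap.range (D : X →ₗ[ℝ] Y) : Set Y) = Set.range ⇑Dq := by
    ext y
    constructor
    · rintro ⟨x, rfl⟩
      have hx : x ∈ N ⊔ q := by rw [hq_compl.sup_eq_top]; trivial
      obtain ⟨a, ha, b, hb, rfl⟩ := Submodule.mem_sup.mp hx
      refine ⟨⟨b, hb⟩, ?_⟩
      show D b = D (a + b)
      rw [map_add, (show D a = 0 from LinearMap.mem_ker.mp ha), zero_add]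
    · rintro ⟨x, rfl⟩
      exact ⟨(x : X), rfl⟩
  rw [hrange]
  exact hclosed
end

section
/- Let X, Y, Z be Banach spaces, D : X → Y a Fredholm operator, and L : Z → Y a bounded linear operator. Then: (i) the range of the operator D ⊕ L : X × Z → Y, (x,z) ↦ Dx + Lz, is closed and has finite-dimensional complement in Y; (ii) if D ⊕ L is surjective, then the kernel ker(D ⊕ L) admits a closed complement in X × Z, and the projection P : ker(D ⊕ L) → Z, (x,z) ↦ z, is a Fredholm operator whose kernel is linearly isomorphic to ker(D) and whose cokernel Z/range(P) is linearly isomorphic to Y/range(D); in particular ind(P) = ind(D). -/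
/-!
Write `T = D ⊕ L`. Its range contains the closed, finite-codimensional range of `D`, hence is
itself closed and finite-codimensional. If `X₀` is a closed complement of the finite-dimensional
`ker D`, then `X₀ × 0` meets `ker T` trivially and `ker T + X₀ × 0 ⊇ T⁻¹(range D)` has finite
codimension, so `X₀ × 0` plus a finite-dimensional algebraic complement of that sum is a closed
complement of `ker T`. For the projection `P`, `(x, 0) ↦ x` identifies `ker P` with `ker D`, and
`range P = L⁻¹(range D)`; when `T` is onto, `L` induces `Z ⧸ L⁻¹(range D) ≃ Y ⧸ range D`.
-/

/-- A bounded linear operator between normed spaces is *Fredholm* if its kernel is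
finite-dimensional, its range is closed, and its cokernel is finite-dimensional. -/
def IsFredholm {X Y : Type*} [NormedAddCommGroup X] [NormedSpace ℝ X]
    [NormedAddCommGroup Y] [NormedSpace ℝ Y] (T : X →L[ℝ] Y) : Prop :=
  FiniteDimensional ℝ (LinearMap.ker (T : X →ₗ[ℝ] Y)) ∧ IsClosed (LinearMap.range (T : X →ₗ[ℝ] Y) : Set Y) ∧
    FiniteDimensional ℝ (Y ⧸ LinearMap.range (T : X →ₗ[ℝ] Y))

/-- The *Fredholm index* `ind(T) = dim ker(T) − dim coker(T)`. -/
noncomputable def fredholmIndex {X Y : Type*} [NormedAddCommGroup X] [NormedSpace ℝ X]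
    [NormedAddCommGroup Y] [NormedSpace ℝ Y] (T : X →L[ℝ] Y) : ℤ :=
  (Module.finrank ℝ (LinearMap.ker (T : X →ₗ[ℝ] Y)) : ℤ) - (Module.finrank ℝ (Y ⧸ LinearMap.range (T : X →ₗ[ℝ] Y)) : ℤ)

/-- The projection `P : ker(D ⊕ L) → Z`, `(x,z) ↦ z`, onto the second component. -/
noncomputable def kerProjection {X Y Z : Type*}
    [NormedAddCommGroup X] [NormedSpace ℝ X]
    [NormedAddCommGroup Y] [NormedSpace ℝ Y]
    [NormedAddCommGroup Z] [NormedSpace ℝ Z]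
    (D : X →L[ℝ] Y) (L : Z →L[ℝ] Y) :
    (LinearMap.ker (D.coprod L : X × Z →ₗ[ℝ] Y)) →L[ℝ] Z :=
  (ContinuousLinearMap.snd ℝ X Z).comp (LinearMap.ker (D.coprod L : X × Z →ₗ[ℝ] Y)).subtypeL


namespace Submodule

theorem CoFG.comap {R M N : Type*} [CommRing R] [IsNoetherianRing R] [AddCommGroup M] [Module R M]
    [AddCommGroup N] [Module R N] {p : Submodule R N} (hp : p.CoFG) (f : M →ₗ[R] N) :
    (p.comap f).CoFG := by
  rw [← ker_mkQ p, ← LinearMap.ker_comp]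
  exact CoFG.ker _

noncomputable def quotientComapEquivOfSupRangeEqTop {R M N : Type*} [Ring R] [AddCommGroup M]
    [Module R M] [AddCommGroup N] [Module R N] (f : M →ₗ[R] N) (p : Submodule R N)
    (h : p ⊔ LinearMap.range f = ⊤) : (M ⧸ p.comap f) ≃ₗ[R] N ⧸ p :=
  (quotEquivOfEq _ _ (by rw [LinearMap.ker_comp, ker_mkQ])).trans
    ((p.mkQ ∘ₗ f).quotKerEquivOfSurjective <| by
      rwa [← LinearMap.range_eq_top, LinearMap.range_comp, map_mkQ_eq_top])

theorem exists_isClosed_isCompl_of_disjoint {𝕜 E : Type*} [NontriviallyNormedField 𝕜]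
    [CompleteSpace 𝕜] [AddCommGroup E] [TopologicalSpace E] [IsTopologicalAddGroup E] [T2Space E]
    [Module 𝕜 E] [ContinuousSMul 𝕜 E] {K U₀ : Submodule 𝕜 E} (hU₀ : IsClosed (U₀ : Set E))
    (hdisj : Disjoint K U₀) (hcofg : (K ⊔ U₀).CoFG) :
    ∃ U : Submodule 𝕜 E, IsClosed (U : Set E) ∧ IsCompl K U := by
  obtain ⟨C, hC⟩ := (K ⊔ U₀).exists_isCompl
  have : FiniteDimensional 𝕜 C := .of_fg (hcofg.fg_of_isCompl hC)
  exact ⟨U₀ ⊔ C, U₀.isClosed_sup_finiteDimensional C hU₀,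
    hdisj.isCompl_sup_right_of_isCompl_sup_left hC⟩

end Submodule

open LinearMap

section Coprod

variable {𝕜 X Y Z : Type*} [RCLike 𝕜] [NormedAddCommGroup X] [NormedSpace 𝕜 X]
  [NormedAddCommGroup Y] [NormedSpace 𝕜 Y] [NormedAddCommGroup Z] [NormedSpace 𝕜 Z]
  (D : X →L[𝕜] Y) (L : Z →L[𝕜] Y)

theorem ContinuousLinearMap.mem_ker_coprod {v : X × Z} :
    v ∈ ker (D.coprod L : X × Z →ₗ[𝕜] Y) ↔ D v.1 + L v.2 = 0 := by
  simp

theorem ContinuousLinearMap.exists_isClosed_isCompl_ker_coprod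
    [FiniteDimensional 𝕜 (ker (D : X →ₗ[𝕜] Y))] (hD : (range (D : X →ₗ[𝕜] Y)).CoFG) :
    ∃ U : Submodule 𝕜 (X × Z), IsClosed (U : Set (X × Z)) ∧
      IsCompl (ker (D.coprod L : X × Z →ₗ[𝕜] Y)) U := by
  obtain ⟨X₀, hX₀_closed, hX₀⟩ :=
    (Submodule.ClosedComplemented.of_finiteDimensional
      (ker (D : X →ₗ[𝕜] Y))).exists_isClosed_isCompl
  have hdisj : Disjoint (ker (D.coprod L : X × Z →ₗ[𝕜] Y)) (X₀.prod ⊥) := by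
    rw [Submodule.disjoint_def]
    rintro ⟨x, z⟩ hxz ⟨hx, rfl : z = 0⟩
    have hDx : D x = 0 := by simpa [D.mem_ker_coprod L] using hxz
    simp [Submodule.disjoint_def.mp hX₀.disjoint x hDx hx]
  have hle : (range (D : X →ₗ[𝕜] Y)).comap (D.coprod L : X × Z →ₗ[𝕜] Y) ≤
      ker (D.coprod L : X × Z →ₗ[𝕜] Y) ⊔ X₀.prod ⊥ := by
    rintro v ⟨x, hx⟩
    have hx_mem : x ∈ ker (D : X →ₗ[𝕜] Y) ⊔ X₀ := hX₀.sup_eq_top ▸ Submodule.mem_top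
    obtain ⟨k, hk, x₀, hx₀, rfl⟩ := Submodule.mem_sup.mp hx_mem
    refine Submodule.mem_sup.mpr ⟨v - (x₀, 0), ?_, (x₀, 0), ⟨hx₀, rfl⟩, sub_add_cancel _ _⟩
    rw [mem_ker, map_sub, ← hx]
    simpa using hk
  refine Submodule.exists_isClosed_isCompl_of_disjoint ?_ hdisj ((hD.comap _).of_le hle)
  rw [Submodule.prod_coe, Submodule.bot_coe]
  exact hX₀_closed.prod isClosed_singleton

end Coprod

section KerProjection

variable {X Y Z : Type*} [NormedAddCommGroup X] [NormedSpace ℝ X]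
  [NormedAddCommGroup Y] [NormedSpace ℝ Y] [NormedAddCommGroup Z] [NormedSpace ℝ Z]
  (D : X →L[ℝ] Y) (L : Z →L[ℝ] Y)

@[simp]
theorem kerProjection_apply (v : ker (D.coprod L : X × Z →ₗ[ℝ] Y)) :
    kerProjection D L v = (v : X × Z).2 :=
  rfl

noncomputable def kerKerProjectionEquiv :
    ker (kerProjection D L : ker (D.coprod L : X × Z →ₗ[ℝ] Y) →ₗ[ℝ] Z) ≃ₗ[ℝ]
      ker (D : X →ₗ[ℝ] Y) where
  toFun u := ⟨(u : X × Z).1, by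
    have h := (D.mem_ker_coprod L).mp (u : ker (D.coprod L : X × Z →ₗ[ℝ] Y)).2
    simpa [show (u : X × Z).2 = 0 from u.2] using h⟩
  invFun x := ⟨⟨((x : X), 0), by simp⟩, rfl⟩
  map_add' _ _ := rfl
  map_smul' _ _ := rfl
  left_inv u := Subtype.ext <| Subtype.ext <| Prod.ext rfl (u.2 : (u : X × Z).2 = 0).symm
  right_inv _ := rfl

theorem range_kerProjection :
    range (kerProjection D L : ker (D.coprod L : X × Z →ₗ[ℝ] Y) →ₗ[ℝ] Z) =
      (range (D : X →ₗ[ℝ] Y)).comap (L : Z →ₗ[ℝ] Y) := by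
  ext z
  constructor
  · rintro ⟨⟨⟨x, z⟩, hxz⟩, rfl⟩
    exact ⟨-x, by simpa [neg_eq_iff_add_eq_zero] using (D.mem_ker_coprod L).mp hxz⟩
  · rintro ⟨x, hx⟩
    exact ⟨⟨(-x, z), by simp [← hx]⟩, rfl⟩

noncomputable def cokerKerProjectionEquiv (hT : Function.Surjective (D.coprod L)) :
    (Z ⧸ range (kerProjection D L : ker (D.coprod L : X × Z →ₗ[ℝ] Y) →ₗ[ℝ] Z)) ≃ₗ[ℝ]
      Y ⧸ range (D : X →ₗ[ℝ] Y) :=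
  (Submodule.quotEquivOfEq _ _ (range_kerProjection D L)).trans <|
    Submodule.quotientComapEquivOfSupRangeEqTop (L : Z →ₗ[ℝ] Y) _ <| by
      rw [← ContinuousLinearMap.range_coprod, LinearMap.range_eq_top]
      exact hT

theorem isFredholm_kerProjection (hD : IsFredholm D) (hT : Function.Surjective (D.coprod L)) :
    IsFredholm (kerProjection D L) := by
  obtain ⟨hker, hclosed, hcoker⟩ := hD
  refine ⟨(kerKerProjectionEquiv D L).symm.finiteDimensional, ?_,
    (cokerKerProjectionEquiv D L hT).symm.finiteDimensional⟩
  rw [range_kerProjection]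
  exact hclosed.preimage L.continuous

theorem fredholmIndex_kerProjection (hT : Function.Surjective (D.coprod L)) :
    fredholmIndex (kerProjection D L) = fredholmIndex D := by
  rw [fredholmIndex, fredholmIndex, (kerKerProjectionEquiv D L).finrank_eq,
    (cokerKerProjectionEquiv D L hT).finrank_eq]

end KerProjection

theorem coprod_fredholm_general
    {X Y Z : Type*}
    [NormedAddCommGroup X] [NormedSpace ℝ X]
    [NormedAddCommGroup Y] [NormedSpace ℝ Y]
    [NormedAddCommGroup Z] [NormedSpace ℝ Z]
    (D : X →L[ℝ] Y) (L : Z →L[ℝ] Y)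
    (hD : IsFredholm D) :
    (IsClosed (LinearMap.range (D.coprod L : X × Z →ₗ[ℝ] Y) : Set Y) ∧
      FiniteDimensional ℝ (Y ⧸ LinearMap.range (D.coprod L : X × Z →ₗ[ℝ] Y))) ∧
    (Function.Surjective ⇑(D.coprod L) →
      (∃ U : Submodule ℝ (X × Z), IsClosed (U : Set (X × Z)) ∧
          IsCompl (LinearMap.ker (D.coprod L : X × Z →ₗ[ℝ] Y)) U) ∧
      IsFredholm (kerProjection D L) ∧
      Nonempty ((LinearMap.ker
        (kerProjection D L : LinearMap.ker (D.coprod L : X × Z →ₗ[ℝ] Y) →ₗ[ℝ] Z)) ≃ₗ[ℝ]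
        (LinearMap.ker (D : X →ₗ[ℝ] Y))) ∧
      Nonempty ((Z ⧸ LinearMap.range
        (kerProjection D L : LinearMap.ker (D.coprod L : X × Z →ₗ[ℝ] Y) →ₗ[ℝ] Z)) ≃ₗ[ℝ]
        (Y ⧸ LinearMap.range (D : X →ₗ[ℝ] Y))) ∧
      fredholmIndex (kerProjection D L) = fredholmIndex D) := by
  have ⟨_, hclosed, hcoker⟩ := hD
  have hle : range (D : X →ₗ[ℝ] Y) ≤ range (D.coprod L : X × Z →ₗ[ℝ] Y) := by
    rw [ContinuousLinearMap.range_coprod]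
    exact le_sup_left
  refine ⟨⟨Submodule.isClosed_mono_of_finiteDimensional_quotient hclosed hle,
    Submodule.CoFG.of_le hle hcoker⟩, fun hT => ⟨D.exists_isClosed_isCompl_ker_coprod L hcoker,
    isFredholm_kerProjection D L hD hT, ⟨kerKerProjectionEquiv D L⟩,
    ⟨cokerKerProjectionEquiv D L hT⟩, fredholmIndex_kerProjection D L hT⟩⟩

/-- Let `D : X → Y` be Fredholm and `L : Z → Y` bounded. Then (i) the range of
`D ⊕ L : (x,z) ↦ Dx + Lz` is closed with finite-dimensional complement; (ii) if `D ⊕ L`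
is surjective, then `ker(D ⊕ L)` admits a closed complement, and the projection
`P : ker(D ⊕ L) → Z` is Fredholm with `ker P ≅ ker D`, `coker P ≅ coker D`, so
`ind(P) = ind(D)`. -/
theorem coprod_fredholm
    {X Y Z : Type*}
    [NormedAddCommGroup X] [NormedSpace ℝ X] [CompleteSpace X]
    [NormedAddCommGroup Y] [NormedSpace ℝ Y] [CompleteSpace Y]
    [NormedAddCommGroup Z] [NormedSpace ℝ Z] [CompleteSpace Z]
    (D : X →L[ℝ] Y) (L : Z →L[ℝ] Y)
    (hD : IsFredholm D) :
    (IsClosed (LinearMap.range (D.coprod L : X × Z →ₗ[ℝ] Y) : Set Y) ∧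
      FiniteDimensional ℝ (Y ⧸ LinearMap.range (D.coprod L : X × Z →ₗ[ℝ] Y))) ∧
    (Function.Surjective ⇑(D.coprod L) →
      (∃ U : Submodule ℝ (X × Z), IsClosed (U : Set (X × Z)) ∧
          IsCompl (LinearMap.ker (D.coprod L : X × Z →ₗ[ℝ] Y)) U) ∧
      IsFredholm (kerProjection D L) ∧
      Nonempty ((LinearMap.ker
        (kerProjection D L : LinearMap.ker (D.coprod L : X × Z →ₗ[ℝ] Y) →ₗ[ℝ] Z)) ≃ₗ[ℝ]
        (LinearMap.ker (D : X →ₗ[ℝ] Y))) ∧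
      Nonempty ((Z ⧸ LinearMap.range
        (kerProjection D L : LinearMap.ker (D.coprod L : X × Z →ₗ[ℝ] Y) →ₗ[ℝ] Z)) ≃ₗ[ℝ]
        (Y ⧸ LinearMap.range (D : X →ₗ[ℝ] Y))) ∧
      fredholmIndex (kerProjection D L) = fredholmIndex D) :=
  coprod_fredholm_general D L hD
end
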